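/- Define G(γ, d) = −2πγ − γ(arcsin γ − arcsin(γ/d)) + √(d²−γ²) − √(1−γ²) + (d−1). For every d > 1 one has G(0, d) = 2(d−1) > 0, and G(1, d) = −5π/2 + arcsin(1/d) + √(d²−1) + d − 1. Consequently, for every d with 1 < d < d̂ (where d̂ is the unique zero of d ↦ −5π/2 + arcsin(1/d) + √(d²−1) + d − 1 on (1,∞)) one has G(1, d) < 0, and hence there exists γ_max(d) ∈ (0, 1) with G(γ_max(d), d) = 0. -/

import Mathlib

/-!
Two applications of the intermediate value theorem: `g(1) = −2π < 0` and `g` has no zero in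
`(1, d̂)`, so `g < 0` there; then `G(·, d)` goes from `2(d − 1) > 0` at `γ = 0` to `g(d) < 0`
at `γ = 1`.
-/

open Real Filter Topology

/-- `G(γ, d) = −2πγ − γ(arcsin γ − arcsin(γ/d)) + √(d²−γ²) − √(1−γ²) + (d−1)`,
whose zero in `γ` defines the critical current `γ_max(d)` of a microresonator. -/
noncomputable def Gfun (γ d : ℝ) : ℝ :=
  -(2 * π * γ) - γ * (Real.arcsin γ - Real.arcsin (γ / d)) +
    Real.sqrt (d ^ 2 - γ ^ 2) - Real.sqrt (1 - γ ^ 2) + (d - 1)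

/-- `g(d) = −5π/2 + arcsin(1/d) + √(d²−1) + d − 1`. -/
noncomputable def gfun (d : ℝ) : ℝ :=
  -(5 * π / 2) + Real.arcsin (1 / d) + Real.sqrt (d ^ 2 - 1) + d - 1

lemma neg_of_continuousOn_of_ne_zero {f : ℝ → ℝ} {a b : ℝ} (hab : a ≤ b)
    (hf : ContinuousOn f (Set.Icc a b)) (ha : f a < 0) (hne : ∀ x ∈ Set.Ioc a b, f x ≠ 0) :
    f b < 0 := by
  by_contra! hb
  obtain ⟨x, hx, hfx⟩ := intermediate_value_Icc hab hf ⟨ha.le, hb⟩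
  have hax : a ≠ x := by rintro rfl; exact ha.ne hfx
  exact hne x ⟨lt_of_le_of_ne hx.1 hax, hx.2⟩ hfx

lemma Gfun_zero_left {d : ℝ} (hd : 0 ≤ d) : Gfun 0 d = 2 * (d - 1) := by
  simp only [Gfun, mul_zero, neg_zero, zero_div, arcsin_zero, sub_self,
    zero_pow two_ne_zero, sub_zero, Real.sqrt_sq hd, sqrt_one]
  ring

lemma Gfun_one_left (d : ℝ) : Gfun 1 d = gfun d := by
  simp only [Gfun, gfun, mul_one, one_mul, one_div, arcsin_one, one_pow, sub_self, sqrt_zero]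
  ring

lemma gfun_one : gfun 1 = -(2 * π) := by
  simp only [gfun, div_one, arcsin_one, one_pow, sub_self, sqrt_zero]
  ring

lemma continuousOn_gfun : ContinuousOn gfun (Set.Ioi 0) := by
  unfold gfun
  fun_prop (disch := intro x hx; exact (Set.mem_Ioi.mp hx).ne')

lemma continuous_Gfun_left (d : ℝ) : Continuous (fun γ => Gfun γ d) := by
  unfold Gfun
  fun_prop

/-- For every `d > 1`: `G(0, d) = 2(d−1) > 0` and `G(1, d) = g(d)`. Consequently, if
`d̂` is the unique zero of `g` on `(1,∞)`, then for every `d` with `1 < d < d̂` one has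
`G(1, d) < 0`, and hence there exists `γ_max(d) ∈ (0,1)` with `G(γ_max(d), d) = 0`. -/
theorem stmt17 :
    (∀ d : ℝ, 1 < d →
      Gfun 0 d = 2 * (d - 1) ∧ 0 < Gfun 0 d ∧ Gfun 1 d = gfun d) ∧
    (∀ dhat : ℝ, 1 < dhat → gfun dhat = 0 →
      (∀ d' : ℝ, 1 < d' → gfun d' = 0 → d' = dhat) →
      ∀ d : ℝ, 1 < d → d < dhat →
        Gfun 1 d < 0 ∧ ∃ γmax ∈ Set.Ioo (0 : ℝ) 1, Gfun γmax d = 0) := by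
  refine ⟨fun d hd => ?_, fun dhat _ _ huniq d hd hdd => ?_⟩
  · rw [Gfun_zero_left (by linarith), Gfun_one_left]
    exact ⟨rfl, by linarith, rfl⟩
  have hG0 : 0 < Gfun 0 d := by rw [Gfun_zero_left (by linarith)]; linarith
  have hG1 : Gfun 1 d < 0 := by
    rw [Gfun_one_left]
    refine neg_of_continuousOn_of_ne_zero hd.le
      (continuousOn_gfun.mono fun x hx => by simp only [Set.mem_Ioi]; linarith [hx.1])
      (by rw [gfun_one]; linarith [pi_pos]) fun x hx hx0 => ?_
    linarith [huniq x hx.1 hx0, hx.2]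
  obtain ⟨γ, hγ, hGγ⟩ := intermediate_value_Ioo' zero_le_one
    (continuous_Gfun_left d).continuousOn ⟨hG1, hG0⟩
  exact ⟨hG1, γ, hγ, hGγ⟩
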